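/- Let L be a bounded operator on a Banach space B with spectral radius 1, such that 1 is a simple eigenvalue with eigenvector ρ and the remaining spectrum is contained in {|z| ≤ λ} for some λ < 1 (spectral gap). Let t ↦ L_t be a family of bounded operators with ‖L_t − L‖ ≤ C|t|^δ for some δ ∈ (0,1] and L_0 = L, each with a fixed point ρ_t normalized by ℓ(ρ_t) = 1 for a fixed functional ℓ with ℓ(ρ) = 1, L*ℓ = ℓ and L_t*ℓ = ℓ. Then for small |t|, ρ_t exists, is unique with this normalization, and ‖ρ_t − ρ‖ ≤ C'|t|^δ. -/

import Mathlib

/-!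
STATEMENT 14: Let `L` be a bounded operator on a complex Banach space `B` with spectral
radius 1, such that `1` is a simple eigenvalue with eigenvector `ρ` (normalized by
`ℓ(ρ) = 1` for an eigenfunctional `ℓ` of `L*` with eigenvalue `1`; the spectral projection
is the rank-one projection `P = ℓ(·) • ρ`) and the remaining spectrum is contained in
`{|z| ≤ λ}`, `λ < 1` (encoded by `spectralRadius ℂ (L ∘ (1−P)) ≤ λ`). Let `t ↦ L_t` be a
family with `L_0 = L`, `‖L_t − L‖ ≤ C |t|^δ` (δ ∈ (0,1]) and `L_t* ℓ = ℓ`. Then for small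
`|t|` there exists a fixed point `ρ_t` of `L_t`, unique with the normalization
`ℓ(ρ_t) = 1`, and `‖ρ_t − ρ‖ ≤ C' |t|^δ`.
-/

open scoped ENNReal NNReal

theorem perturbation_spectral_gap_fixed_points
    {B : Type*} [NormedAddCommGroup B] [NormedSpace ℂ B] [CompleteSpace B]
    (L : B →L[ℂ] B) (ρ : B) (ℓ : B →L[ℂ] ℂ)
    (hρ : L ρ = ρ) (hℓρ : ℓ ρ = 1) (hℓL : ∀ v, ℓ (L v) = ℓ v)
    (hsr : spectralRadius ℂ L = 1)
    (lam : ℝ≥0) (hlam : (lam : ℝ) < 1)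
    (hgap : spectralRadius ℂ (L ∘L (1 - ℓ.smulRight ρ)) ≤ (lam : ℝ≥0∞))
    (Lfam : ℝ → B →L[ℂ] B) (hL0 : Lfam 0 = L)
    (δ C : ℝ) (hδ0 : 0 < δ) (hδ1 : δ ≤ 1) (hC : 0 < C)
    (hLip : ∀ t : ℝ, ‖Lfam t - L‖ ≤ C * |t| ^ δ)
    (hℓLt : ∀ (t : ℝ) (v : B), ℓ (Lfam t v) = ℓ v) :
    ∃ ε₁ > 0, ∃ C' > 0, ∀ t : ℝ, |t| < ε₁ →
      ∃ ρt : B, (Lfam t ρt = ρt ∧ ℓ ρt = 1) ∧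
        (∀ ρt' : B, Lfam t ρt' = ρt' ∧ ℓ ρt' = 1 → ρt' = ρt) ∧
        ‖ρt - ρ‖ ≤ C' * |t| ^ δ := by
  classical
  have hρ0 : ρ ≠ 0 := by
    intro h
    rw [h, map_zero] at hℓρ
    exact one_ne_zero hℓρ.symm
  have : Nontrivial B := ⟨⟨ρ, 0, hρ0⟩⟩
  set P : B →L[ℂ] B := ℓ.smulRight ρ with hPdef
  set Q : B →L[ℂ] B := L * (1 - P) with hQdef
  -- `1 - Q` is a unit since `spectralRadius Q ≤ lam < 1`.
  have hQunit : IsUnit ((1 : B →L[ℂ] B) - Q) := by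
    have hlt : spectralRadius ℂ Q < (‖(1 : ℂ)‖₊ : ℝ≥0∞) := by
      refine lt_of_le_of_lt hgap ?_
      have h1 : (‖(1 : ℂ)‖₊ : ℝ≥0∞) = 1 := by simp
      rw [h1]
      exact_mod_cast (by exact_mod_cast hlam : lam < (1 : ℝ≥0))
    have hres : (1 : ℂ) ∈ resolventSet ℂ Q :=
      spectrum.mem_resolventSet_of_spectralRadius_lt hlt
    simpa [resolventSet, Set.mem_setOf_eq] using hres
  set u₀ : (B →L[ℂ] B)ˣ := hQunit.unit with hu₀def
  have hu₀val : (u₀ : B →L[ℂ] B) = 1 - Q := hQunit.unit_spec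
  set K : ℝ := ‖((u₀⁻¹ : (B →L[ℂ] B)ˣ) : B →L[ℂ] B)‖ with hKdef
  have h1ne : (1 : B →L[ℂ] B) ≠ 0 := by
    intro h
    apply hρ0
    have := congrArg (fun f : B →L[ℂ] B => f ρ) h
    simpa using this
  have hK : 0 < K := by
    rw [hKdef, norm_pos_iff]
    intro h
    apply h1ne
    rw [← u₀.inv_mul]
    simp [Units.inv_eq_val_inv, h]
  set N : ℝ := ‖(1 : B →L[ℂ] B) - P‖ with hNdef
  have hN : 0 ≤ N := norm_nonneg _
  set D : ℝ := 2 * C * (N + 1) * (K + 1) with hDdef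
  have hD : 0 < D := by positivity
  set base : ℝ := D⁻¹ with hbasedef
  have hbase : 0 < base := by positivity
  refine ⟨base ^ (1 / δ), Real.rpow_pos_of_pos hbase _, 2 * K * C * ‖ρ‖,
    mul_pos (mul_pos (mul_pos two_pos hK) hC) (norm_pos_iff.mpr hρ0), ?_⟩
  intro t ht
  -- key smallness
  have htδ : |t| ^ δ < base := by
    have h1 : |t| ^ δ < (base ^ (1 / δ)) ^ δ :=
      Real.rpow_lt_rpow (abs_nonneg t) ht hδ0
    rwa [← Real.rpow_mul hbase.le, one_div_mul_cancel hδ0.ne', Real.rpow_one] at h1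
  set ΔP : B →L[ℂ] B := (Lfam t - L) * (1 - P) with hΔPdef
  have hΔPnorm : ‖ΔP‖ ≤ C * |t| ^ δ * N := by
    calc ‖ΔP‖ ≤ ‖Lfam t - L‖ * N := norm_mul_le _ _
    _ ≤ C * |t| ^ δ * N := by
        exact mul_le_mul_of_nonneg_right (hLip t) hN
  set E : B →L[ℂ] B := ((u₀⁻¹ : (B →L[ℂ] B)ˣ) : B →L[ℂ] B) * ΔP with hEdef
  have hEnorm : ‖E‖ < 1 / 2 := by
    have h1 : ‖E‖ ≤ K * (C * |t| ^ δ * N) :=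
      le_trans (norm_mul_le _ _) (mul_le_mul_of_nonneg_left hΔPnorm hK.le)
    have htnn : (0 : ℝ) ≤ |t| ^ δ := Real.rpow_nonneg (abs_nonneg t) δ
    have h2 : K * (C * |t| ^ δ * N) ≤ (K + 1) * (C * |t| ^ δ * (N + 1)) := by
      nlinarith [mul_nonneg (mul_nonneg hC.le htnn) hK.le,
        mul_nonneg (mul_nonneg hC.le htnn) hN, mul_nonneg hC.le htnn]
    have h3 : (K + 1) * (C * |t| ^ δ * (N + 1)) < (K + 1) * (C * base * (N + 1)) := by
      apply mul_lt_mul_of_pos_left _ (by positivity)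
      apply mul_lt_mul_of_pos_right _ (by positivity)
      exact mul_lt_mul_of_pos_left htδ hC
    have h4 : (K + 1) * (C * base * (N + 1)) = 1 / 2 := by
      rw [hbasedef, hDdef]
      field_simp
    linarith
  have hE1 : ‖E‖ < 1 := by linarith
  set u₁ : (B →L[ℂ] B)ˣ := Units.oneSub E hE1 with hu₁def
  set ut : (B →L[ℂ] B)ˣ := u₀ * u₁ with hutdef
  set Mt : B →L[ℂ] B := 1 - Lfam t * (1 - P) with hMtdef
  have hval : (ut : B →L[ℂ] B) = Mt := by
    have h1 : (ut : B →L[ℂ] B) = (u₀ : B →L[ℂ] B) * (1 - E) := by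
      rw [hutdef, Units.val_mul, hu₁def, Units.val_oneSub]
    rw [h1, mul_sub, mul_one, hEdef, ← mul_assoc, u₀.mul_inv, one_mul, hu₀val,
      hMtdef, hQdef, hΔPdef, sub_mul]
    abel
  -- bound on the inverse
  have hinv1 : ‖((u₁⁻¹ : (B →L[ℂ] B)ˣ) : B →L[ℂ] B)‖ ≤ 2 := by
    have heq : ((u₁⁻¹ : (B →L[ℂ] B)ˣ) : B →L[ℂ] B) = ∑' n : ℕ, E ^ n := rfl
    rw [heq]
    have := tsum_geometric_le_of_norm_lt_one E hE1
    have hn1 : ‖(1 : B →L[ℂ] B)‖ = 1 := norm_one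
    have hinv : (1 - ‖E‖)⁻¹ ≤ 2 := by
      rw [show (2 : ℝ) = (1/2 : ℝ)⁻¹ by norm_num]
      apply inv_anti₀ (by norm_num)
      linarith
    rw [hn1] at this
    linarith
  have hinvt : ‖((ut⁻¹ : (B →L[ℂ] B)ˣ) : B →L[ℂ] B)‖ ≤ 2 * K := by
    have h1 : (ut⁻¹ : (B →L[ℂ] B)ˣ) = u₁⁻¹ * u₀⁻¹ := by
      rw [hutdef, mul_inv_rev]
    rw [h1, Units.val_mul]
    calc ‖((u₁⁻¹ : (B →L[ℂ] B)ˣ) : B →L[ℂ] B) * ((u₀⁻¹ : (B →L[ℂ] B)ˣ) : B →L[ℂ] B)‖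
        ≤ ‖((u₁⁻¹ : (B →L[ℂ] B)ˣ) : B →L[ℂ] B)‖ * K := norm_mul_le _ _
      _ ≤ 2 * K := mul_le_mul_of_nonneg_right hinv1 hK.le
  -- application identities
  have happ : ∀ x : B, Mt (((ut⁻¹ : (B →L[ℂ] B)ˣ) : B →L[ℂ] B) x) = x := by
    intro x
    have h1 := congrArg (fun f : B →L[ℂ] B => f x) ut.mul_inv
    simp only [ContinuousLinearMap.mul_apply, ContinuousLinearMap.one_apply] at h1
    rw [← hval]
    exact h1
  have happ' : ∀ x : B, ((ut⁻¹ : (B →L[ℂ] B)ˣ) : B →L[ℂ] B) (Mt x) = x := by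
    intro x
    have h1 := congrArg (fun f : B →L[ℂ] B => f x) ut.inv_mul
    simp only [ContinuousLinearMap.mul_apply, ContinuousLinearMap.one_apply] at h1
    rw [← hval]
    exact h1
  -- Mt explicit formula
  have hMtapp : ∀ v : B, Mt v = v - Lfam t (v - ℓ v • ρ) := by
    intro v
    simp [hMtdef, hPdef, ContinuousLinearMap.mul_apply, ContinuousLinearMap.sub_apply,
      ContinuousLinearMap.smulRight_apply]
  have hℓ1P : ∀ v : B, ℓ (v - ℓ v • ρ) = 0 := by
    intro v
    simp [map_sub, hℓρ]
  have hℓMt : ∀ v : B, ℓ (Mt v) = ℓ v := by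
    intro v
    rw [hMtapp, map_sub, hℓLt, hℓ1P, sub_zero]
  set w : B := ((ut⁻¹ : (B →L[ℂ] B)ˣ) : B →L[ℂ] B) (Lfam t ρ - ρ) with hwdef
  have hMtw : Mt w = Lfam t ρ - ρ := happ _
  have hℓw : ℓ w = 0 := by
    have := hℓMt w
    rw [hMtw] at this
    rw [← this, map_sub, hℓLt, sub_self]
  have hfix : Lfam t (ρ + w) = ρ + w := by
    have h1 : Mt w = w - Lfam t w := by
      rw [hMtapp, hℓw, zero_smul, sub_zero]
    have h2 : w - Lfam t w = Lfam t ρ - ρ := by rw [← h1, hMtw]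
    have h3 : Lfam t w = w - Lfam t ρ + ρ := by
      have := h2; abel_nf; abel_nf at this; linear_combination (norm := abel) -this
    rw [map_add, h3]
    abel
  have hℓρt : ℓ (ρ + w) = 1 := by
    rw [map_add, hℓρ, hℓw, add_zero]
  refine ⟨ρ + w, ⟨hfix, hℓρt⟩, ?_, ?_⟩
  · -- uniqueness
    intro ρt' ⟨hfix', hℓ'⟩
    have hd : ℓ (ρt' - (ρ + w)) = 0 := by
      rw [map_sub, hℓ', hℓρt, sub_self]
    have hLd : Lfam t (ρt' - (ρ + w)) = ρt' - (ρ + w) := by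
      rw [map_sub, hfix', hfix]
    have hMd : Mt (ρt' - (ρ + w)) = 0 := by
      rw [hMtapp, hd, zero_smul, sub_zero, hLd, sub_self]
    have := happ' (ρt' - (ρ + w))
    rw [hMd, map_zero] at this
    have h0 : ρt' - (ρ + w) = 0 := this.symm
    linear_combination (norm := abel) h0
  · -- the bound
    have h1 : ρ + w - ρ = w := by abel
    rw [h1, hwdef]
    have h2 : Lfam t ρ - ρ = (Lfam t - L) ρ := by
      rw [ContinuousLinearMap.sub_apply, hρ]
    calc ‖((ut⁻¹ : (B →L[ℂ] B)ˣ) : B →L[ℂ] B) (Lfam t ρ - ρ)‖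
        ≤ ‖((ut⁻¹ : (B →L[ℂ] B)ˣ) : B →L[ℂ] B)‖ * ‖Lfam t ρ - ρ‖ :=
          ContinuousLinearMap.le_opNorm _ _
      _ ≤ (2 * K) * (C * |t| ^ δ * ‖ρ‖) := by
          apply mul_le_mul hinvt _ (norm_nonneg _) (by positivity)
          rw [h2]
          calc ‖(Lfam t - L) ρ‖ ≤ ‖Lfam t - L‖ * ‖ρ‖ := ContinuousLinearMap.le_opNorm _ _
            _ ≤ C * |t| ^ δ * ‖ρ‖ := mul_le_mul_of_nonneg_right (hLip t) (norm_nonneg _)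
      _ = 2 * K * C * ‖ρ‖ * |t| ^ δ := by ring
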